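/- Let p ≥ 1 be an integer and let G be a finite rooted forest with n ≥ 1 vertices. Then |leaves(G)| + |longpaths(G, p)| ≥ n/(6p). -/

import Mathlib

open Function

/-- A finite rooted forest: for every vertex, iterating the parent function
eventually stabilizes (reaches a root, i.e. a fixed point of `par`). -/
def IsForest {V : Type*} (par : V → V) : Prop :=
  ∀ v : V, ∃ m : ℕ, par^[m + 1] v = par^[m] v

/-- The leaves: vertices with no children. -/
def leaves {V : Type*} (par : V → V) : Set V :=
  {v | ∀ u, par u = v → u = v}

/-- A vertex has exactly one child. -/
def hasOneChild {V : Type*} (par : V → V) (v : V) : Prop :=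
  ∃! u, u ≠ v ∧ par u = v

/-- Adjacency (parent/child relation) restricted to the subset `S`. -/
def adjOn {V : Type*} (par : V → V) (S : Set V) (u v : V) : Prop :=
  u ∈ S ∧ v ∈ S ∧ u ≠ v ∧ (par u = v ∨ par v = u)

/-- `longpaths par p`: vertices having exactly one child that lie in a connected
component of size at least `p` of the graph induced on the vertices having
exactly one child. -/
def longpaths {V : Type*} (par : V → V) (p : ℕ) : Set V :=
  {v | hasOneChild par v ∧
    p ≤ {u | Relation.ReflTransGen (adjOn par {w | hasOneChild par w}) v u}.ncard}

/-!
Call `O` the set of vertices with exactly one child and `L` the leaves. Every vertex outside `O`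
is a leaf or has at least two children, and distinct vertices have disjoint sets of children, so
`2n ≤ (number of non-roots) + 2|L| + |O|`, i.e. `|Oᶜ| ≤ 2|L|`.

From a vertex of `O` keep walking to the only child; at the deepest vertex of its component the
only child `t` lies outside `O`. All vertices of `O` that reach the same `t` share a component, so
each `t ∉ O` collects fewer than `p` vertices of `O \ longpaths`. Hence
`n = |Oᶜ| + |O \ longpaths| + |longpaths| ≤ p |Oᶜ| + |longpaths| ≤ 2p (|L| + |longpaths|)`.
-/

section

open Finset

variable {V : Type*}

section Children

variable [Fintype V] [DecidableEq V] (par : V → V)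

def children (v : V) : Finset V := {u | u ≠ v ∧ par u = v}

lemma mem_leaves_iff_children_eq_empty (v : V) : v ∈ leaves par ↔ children par v = ∅ := by
  simp only [leaves, children, filter_eq_empty_iff, mem_univ, true_implies, not_and, not_imp_not]
  exact forall_congr' fun u => ⟨fun h hu => h hu, fun h hu => h hu⟩

lemma hasOneChild_iff_card_children_eq_one (v : V) :
    hasOneChild par v ↔ #(children par v) = 1 := by
  simp only [card_eq_one, eq_singleton_iff_unique_mem, children, mem_filter, mem_univ, true_and,
    hasOneChild, ExistsUnique]

lemma sum_card_children_le : ∑ v, #(children par v) ≤ Fintype.card V := by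
  rw [← card_biUnion]
  · exact card_le_univ _
  · intro v _ w _ hvw
    simp only [Function.onFun, children, disjoint_left, mem_filter, mem_univ, true_and]
    rintro u ⟨-, rfl⟩ ⟨-, rfl⟩
    exact hvw rfl

end Children

theorem card_le_two_mul_ncard_leaves_add_ncard_hasOneChild [Finite V] (par : V → V) :
    Nat.card V ≤ 2 * (leaves par).ncard + {v | hasOneChild par v}.ncard := by
  classical
  cases nonempty_fintype V
  have hpt : ∀ v, 2 ≤ #(children par v) + (if v ∈ leaves par then 2 else 0) +
      (if hasOneChild par v then 1 else 0) := by
    intro v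
    split_ifs with hl ho <;>
      simp only [mem_leaves_iff_children_eq_empty, hasOneChild_iff_card_children_eq_one,
        ← card_eq_zero] at * <;> omega
  have hsum := sum_le_sum fun v (_ : v ∈ univ) => hpt v
  simp only [sum_add_distrib, sum_const, card_univ, smul_eq_mul, ← sum_filter] at hsum
  have hL : (leaves par).ncard = #{v | v ∈ leaves par} := by
    rw [Set.ncard_eq_toFinset_card', Set.filter_mem_univ_eq_toFinset]
  have hO : {v | hasOneChild par v}.ncard = #{v | hasOneChild par v} := by
    rw [Set.ncard_eq_toFinset_card', Set.toFinset_ofPred]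
  rw [Nat.card_eq_fintype_card, hL, hO]
  have := sum_card_children_le par
  omega

variable {par : V → V}

namespace IsForest

open Classical in
noncomputable def depth (h : IsForest par) (v : V) : ℕ := Nat.find (h v)

open Classical in
lemma depth_par_lt (h : IsForest par) {u : V} (hu : par u ≠ u) : h.depth (par u) < h.depth u := by
  have hspec : par^[h.depth u + 1] u = par^[h.depth u] u := Nat.find_spec (h u)
  obtain ⟨k, hk⟩ : ∃ k, h.depth u = k + 1 :=
    Nat.exists_eq_succ_of_ne_zero fun h0 => hu (by simpa [h0] using hspec)
  rw [hk, iterate_succ_apply, iterate_succ_apply] at hspec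
  have : h.depth (par u) ≤ k := Nat.find_min' (h (par u)) hspec
  omega

end IsForest

instance (S : Set V) : Std.Symm (adjOn par S) where
  symm _ _ h := ⟨h.2.1, h.1, h.2.2.1.symm, h.2.2.2.symm⟩

def oneChildComponent (par : V → V) (v : V) : Set V :=
  {u | Relation.ReflTransGen (adjOn par {w | hasOneChild par w}) v u}

lemma mem_longpaths {p : ℕ} {v : V} :
    v ∈ longpaths par p ↔ hasOneChild par v ∧ p ≤ (oneChildComponent par v).ncard :=
  Iff.rfl

lemma hasOneChild_of_mem_oneChildComponent {u v : V} (hv : hasOneChild par v)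
    (hu : u ∈ oneChildComponent par v) : hasOneChild par u := by
  rcases Relation.ReflTransGen.cases_tail hu with rfl | ⟨_, -, hadj⟩
  exacts [hv, hadj.2.1]

lemma mem_oneChildComponent_of_mem_of_mem {u v w : V} (hu : w ∈ oneChildComponent par u)
    (hv : w ∈ oneChildComponent par v) : v ∈ oneChildComponent par u :=
  Relation.ReflTransGen.trans hu (Std.Symm.symm _ _ hv)

lemma IsForest.exists_not_hasOneChild_par_mem_oneChildComponent [Finite V] (h : IsForest par)
    {v : V} (hv : hasOneChild par v) :
    ∃ t, ¬ hasOneChild par t ∧ par t ∈ oneChildComponent par v := by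
  -- the only child of a deepest vertex of the component is deeper, so it is not in the component
  obtain ⟨w, hwC, hwmax⟩ := Set.exists_max_image (oneChildComponent par v) h.depth
    (Set.toFinite _) ⟨v, .refl⟩
  have hw := hasOneChild_of_mem_oneChildComponent hv hwC
  obtain ⟨u, ⟨huw, rfl⟩, -⟩ := id hw
  refine ⟨u, fun hu => ?_, hwC⟩
  have huC : u ∈ oneChildComponent par v := hwC.tail ⟨hw, hu, huw.symm, Or.inr rfl⟩
  exact (hwmax u huC).not_gt (h.depth_par_lt huw.symm)

lemma IsForest.ncard_hasOneChild_diff_longpaths_le [Finite V] (h : IsForest par) (p : ℕ) :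
    {v | hasOneChild par v ∧ v ∉ longpaths par p}.ncard ≤
      (p - 1) * {t | ¬ hasOneChild par t}.ncard := by
  set S := {v | hasOneChild par v ∧ v ∉ longpaths par p}
  set T := {t | ¬ hasOneChild par t}
  have hT : T.Finite := Set.toFinite T
  let F (t : V) : Set V := {v ∈ S | par t ∈ oneChildComponent par v}
  have hcover : S ⊆ ⋃ t ∈ hT.toFinset, F t := by
    intro v hv
    obtain ⟨t, ht, hpt⟩ := h.exists_not_hasOneChild_par_mem_oneChildComponent hv.1
    exact Set.mem_biUnion (hT.mem_toFinset.2 ht) ⟨hv, hpt⟩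
  have hfiber (t : V) : (F t).ncard ≤ p - 1 := by
    rcases (F t).eq_empty_or_nonempty with he | ⟨v₀, hv₀S, hv₀t⟩
    · simp [he]
    have hsub : F t ⊆ oneChildComponent par v₀ := fun v hv =>
      mem_oneChildComponent_of_mem_of_mem hv₀t hv.2
    have hshort : (oneChildComponent par v₀).ncard < p := by
      by_contra! hlong
      exact hv₀S.2 (mem_longpaths.2 ⟨hv₀S.1, hlong⟩)
    have := Set.ncard_le_ncard hsub
    omega
  calc S.ncard ≤ (⋃ t ∈ hT.toFinset, F t).ncard := Set.ncard_le_ncard hcover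
    _ ≤ ∑ t ∈ hT.toFinset, (F t).ncard := hT.toFinset.set_ncard_biUnion_le F
    _ ≤ #hT.toFinset • (p - 1) := sum_le_card_nsmul _ _ _ fun t _ => hfiber t
    _ = (p - 1) * T.ncard := by rw [smul_eq_mul, mul_comm, Set.ncard_eq_toFinset_card T hT]

lemma IsForest.card_le_two_mul_ncard_leaves_add_ncard_longpaths [Finite V] (h : IsForest par)
    {p : ℕ} (hp : 1 ≤ p) :
    Nat.card V ≤ 2 * p * (leaves par).ncard + (longpaths par p).ncard := by
  set O := {v | hasOneChild par v}
  have hsplit : O.ncard = {v | hasOneChild par v ∧ v ∉ longpaths par p}.ncard +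
      (longpaths par p).ncard :=
    (Set.ncard_sdiff_add_ncard_of_subset fun _ hv => hv.1).symm
  have hcompl : O.ncard + {t | ¬ hasOneChild par t}.ncard = Nat.card V :=
    Set.ncard_add_ncard_compl O
  have hshort := h.ncard_hasOneChild_diff_longpaths_le p
  have hleaves := card_le_two_mul_ncard_leaves_add_ncard_hasOneChild par
  obtain ⟨q, rfl⟩ : ∃ q, p = q + 1 := ⟨p - 1, by omega⟩
  rw [Nat.add_sub_cancel] at hshort
  nlinarith

end

theorem stmt1_general {V : Type*} [Fintype V] (p : ℕ) (hp : 1 ≤ p)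
    (par : V → V) (hforest : IsForest par)
    (n : ℕ) (hn : n = Fintype.card V) :
    (n : ℝ) / (6 * p) ≤ ((leaves par).ncard : ℝ) + ((longpaths par p).ncard : ℝ) := by
  have hcard : (n : ℝ) ≤ 2 * p * (leaves par).ncard + (longpaths par p).ncard := by
    rw [hn, ← Nat.card_eq_fintype_card]
    exact_mod_cast hforest.card_le_two_mul_ncard_leaves_add_ncard_longpaths hp
  have hp' : (1 : ℝ) ≤ p := by exact_mod_cast hp
  rw [div_le_iff₀ (by positivity)]
  nlinarith [(leaves par).ncard.cast_nonneg (α := ℝ),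
    (longpaths par p).ncard.cast_nonneg (α := ℝ)]

/-- in a finite rooted forest with `n ≥ 1` vertices,
`|leaves(G)| + |longpaths(G, p)| ≥ n / (6p)`. -/
theorem stmt1 {V : Type*} [Fintype V] (p : ℕ) (hp : 1 ≤ p)
    (par : V → V) (hforest : IsForest par)
    (n : ℕ) (hn : n = Fintype.card V) (hn1 : 1 ≤ n) :
    (n : ℝ) / (6 * p) ≤ ((leaves par).ncard : ℝ) + ((longpaths par p).ncard : ℝ) :=
  stmt1_general p hp par hforest n hn
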